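/- Let Γ be a group and j, ρ : Γ → G₀ homomorphisms such that the action of Γ on ℍ² via j is properly discontinuous. Suppose f : ℍ² → ℍ² is a K-Lipschitz map with K < 1 that is (j,ρ)-equivariant, i.e. f(j(γ)·p) = ρ(γ)·f(p) for all γ ∈ Γ, p ∈ ℍ². Then: (i) for every g ∈ G₀ there is a unique point Π(g) ∈ ℍ² with f(Π(g)) = g·Π(g); (ii) the map Π : G₀ → ℍ² is continuous and surjective; (iii) Π(ρ(γ)·g·j(γ)⁻¹) = j(γ)·Π(g) for all γ ∈ Γ and g ∈ G₀; (iv) the action of Γ on G₀ given by γ·g := ρ(γ)·g·j(γ)⁻¹ is properly discontinuous. (Thus the fibers Π⁻¹(p) = {g ∈ G₀ : g·p = f(p)}, which are timelike geodesic circles of anti-de Sitter space G₀, form an equivariant fibration of G₀ over ℍ².) -/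

import Mathlib

noncomputable section

/-- Minkowski space `ℝ^{2,1}` as `Fin 3 → ℝ`. -/
abbrev V : Type := Fin 3 → ℝ

/-- The Minkowski form `⟨x|y⟩ = x₁y₁ + x₂y₂ − x₃y₃`. -/
def mink (x y : V) : ℝ := x 0 * y 0 + x 1 * y 1 - x 2 * y 2

/-- The Minkowski cross product. -/
def mcross (x y : V) : V :=
  ![x 1 * y 2 - x 2 * y 1, x 2 * y 0 - x 0 * y 2, -(x 0 * y 1) + x 1 * y 0]

/-- The hyperbolic plane: upper sheet of the hyperboloid. -/
def H2 : Set V := {p | mink p p = -1 ∧ 0 < p 2}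

/-- Inverse hyperbolic cosine. -/
def acosh (x : ℝ) : ℝ := Real.log (x + Real.sqrt (x ^ 2 - 1))

/-- Hyperbolic distance. -/
def hdist (p q : V) : ℝ := acosh (-(mink p q))

/-- Norm of a (spacelike) tangent vector. -/
def mnorm (x : V) : ℝ := Real.sqrt (mink x x)

/-- The point `exp_p(t x)`. -/
def mexp (p x : V) (t : ℝ) : V :=
  if x = 0 then p
  else Real.cosh (t * mnorm x) • p + (Real.sinh (t * mnorm x) / mnorm x) • x

/-- `d'(x_p, x_q)`: the derivative at `t = 0` of `t ↦ d(exp_p(t x_p), exp_q(t x_q))`. -/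
def dprime (p xp q xq : V) : ℝ :=
  deriv (fun t => hdist (mexp p xp t) (mexp q xq t)) 0

/-- A convex field on `ℍ²`. -/
def IsConvexField (X : Set (V × V)) : Prop :=
  IsClosed X ∧ (∀ px ∈ X, px.1 ∈ H2 ∧ mink px.2 px.1 = 0) ∧
    ∀ p : V, Convex ℝ {x : V | (p, x) ∈ X}

/-- The fiber `X(p)` of a convex field. -/
def fiberAt (X : Set (V × V)) (p : V) : Set V := {x | (p, x) ∈ X}

/-- A convex field is defined over `A` if all fibers over `A` are nonempty. -/
def DefinedOver (X : Set (V × V)) (A : Set V) : Prop := ∀ p ∈ A, (fiberAt X p).Nonempty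

/-- A convex field is `k`-lipschitz. -/
def LipschitzField (k : ℝ) (X : Set (V × V)) : Prop :=
  ∀ p xp q xq, (p, xp) ∈ X → (q, xq) ∈ X → p ≠ q → dprime p xp q xq ≤ k * hdist p q

/-- A (continuous) vector field on `ℍ²`. -/
def IsVectorField (X : V → V) : Prop := ContinuousOn X H2 ∧ ∀ p ∈ H2, mink (X p) p = 0

/-- A vector field is `k`-lipschitz. -/
def LipschitzVF (k : ℝ) (X : V → V) : Prop :=
  ∀ p ∈ H2, ∀ q ∈ H2, p ≠ q → dprime p (X p) q (X q) ≤ k * hdist p q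

/-- Hyperbolic convexity of a subset of `ℍ²`. -/
def HConvex (C : Set V) : Prop :=
  ∀ p ∈ C, ∀ q ∈ C, ∀ m ∈ H2, hdist p m + hdist m q = hdist p q → m ∈ C

/-- Hyperbolic convex hull. -/
def hconvexHull (A : Set V) : Set V := ⋂₀ {C : Set V | A ⊆ C ∧ C ⊆ H2 ∧ HConvex C}

/-- Interior of a subset of `ℍ²` relative to `ℍ²`. -/
def relInterior (A : Set V) : Set V :=
  {p | p ∈ H2 ∧ ∃ O : Set V, IsOpen O ∧ p ∈ O ∧ O ∩ H2 ⊆ A}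

/-- Linear automorphisms of `ℝ³`, a group under composition. -/
abbrev GL3 : Type := V ≃ₗ[ℝ] V

/-- Membership in `G₀`: preserves the Minkowski form, determinant one, preserves `ℍ²`. -/
def InG0 (g : GL3) : Prop :=
  (∀ x y : V, mink (g x) (g y) = mink x y) ∧
    LinearMap.det g.toLinearMap = 1 ∧ ∀ p ∈ H2, g p ∈ H2

/-- Properly discontinuous action on (a subset of) a topological space. -/
def ProperlyDiscOn {Γ α : Type*} [TopologicalSpace α] (act : Γ → α → α) (S : Set α) : Prop :=
  ∀ K L : Set α, K ⊆ S → L ⊆ S → IsCompact K → IsCompact L →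
    {γ : Γ | (act γ '' K ∩ L).Nonempty}.Finite

/-- A `j`-cocycle. -/
def IsCocycle {Γ : Type*} [Group Γ] (j : Γ →* GL3) (u : Γ → V) : Prop :=
  ∀ γ₁ γ₂ : Γ, u (γ₁ * γ₂) = u γ₁ + j γ₁ (u γ₂)

/-- Convex cocompact homomorphism. -/
def ConvexCocompact {Γ : Type*} [Group Γ] (j : Γ →* GL3) : Prop :=
  Function.Injective j ∧
    ProperlyDiscOn (fun (γ : Γ) (p : V) => j γ p) H2 ∧
    ∃ C K : Set V, C.Nonempty ∧ IsClosed C ∧ C ⊆ H2 ∧ HConvex C ∧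
      (∀ γ : Γ, j γ '' C = C) ∧ IsCompact K ∧ C ⊆ ⋃ γ : Γ, j γ '' K

/-- The convex core of `j`. -/
def ConvexCore {Γ : Type*} [Group Γ] (j : Γ →* GL3) : Set V :=
  ⋂₀ {C : Set V | C.Nonempty ∧ IsClosed C ∧ C ⊆ H2 ∧ HConvex C ∧ ∀ γ : Γ, j γ '' C = C}

/-- `(j,u)`-equivariance of a convex field. -/
def EquivField {Γ : Type*} [Group Γ] (j : Γ →* GL3) (u : Γ → V) (X : Set (V × V)) : Prop :=
  ∀ (γ : Γ), ∀ p ∈ H2,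
    fiberAt X (j γ p) = (fun x => j γ x + mcross (u γ) (j γ p)) '' fiberAt X p

/-- `(j,u)`-equivariance of a vector field. -/
def EquivVF {Γ : Type*} [Group Γ] (j : Γ →* GL3) (u : Γ → V) (X : V → V) : Prop :=
  ∀ (γ : Γ), ∀ p ∈ H2, X (j γ p) = j γ (X p) + mcross (u γ) (j γ p)

/-- Translation length `λ(g) = inf_{p ∈ ℍ²} d(p, g·p)`. -/
def transLength (g : V → V) : ℝ := sInf ((fun p => hdist p (g p)) '' H2)

/-- A transformation is hyperbolic if its translation length is positive. -/
def IsHyperbolic (g : V → V) : Prop := 0 < transLength g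

/-- `cross(v)` as a linear map `w ↦ v ∧ w`. -/
def crossLM (v : V) : V →ₗ[ℝ] V where
  toFun w := mcross v w
  map_add' w₁ w₂ := by
    funext i
    fin_cases i <;>
      simp [mcross, Pi.add_apply] <;> ring
  map_smul' c w := by
    funext i
    fin_cases i <;>
      simp [mcross, Pi.smul_apply, smul_eq_mul] <;> ring

/-- `cross(v)` as a continuous linear map. -/
def crossCLM (v : V) : V →L[ℝ] V := LinearMap.toContinuousLinearMap (crossLM v)

/-- A geodesic line of `ℍ²`. -/
def IsGeodesicLine (ℓ : Set V) : Prop :=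
  ∃ a ∈ H2, ∃ b ∈ H2, a ≠ b ∧ ℓ = {m ∈ H2 | mink m (mcross a b) = 0}

/-- A `j(Γ)`-invariant geodesic lamination in the convex core. -/
def IsLamination {Γ : Type*} [Group Γ] (j : Γ →* GL3) (L : Set (Set V)) : Prop :=
  L.Nonempty ∧
  (∀ ℓ ∈ L, IsGeodesicLine ℓ ∧ ℓ ⊆ ConvexCore j) ∧
  (∀ ℓ₁ ∈ L, ∀ ℓ₂ ∈ L, ℓ₁ ≠ ℓ₂ → ℓ₁ ∩ ℓ₂ = ∅) ∧
  IsClosed (⋃₀ L) ∧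
  ∀ (γ : Γ), ∀ ℓ ∈ L, j γ '' ℓ ∈ L

/-- The geodesic flow on the tangent bundle. -/
def gflow (t : ℝ) (px : V × V) : V × V :=
  if px.2 = 0 then px
  else (mexp px.1 px.2 t,
    (mnorm px.2 * Real.sinh (t * mnorm px.2)) • px.1 + Real.cosh (t * mnorm px.2) • px.2)

/-- Parallel transport from `p` to `q` along the geodesic. -/
def ptransport (p q x : V) : V := x + (mink x q / (1 - mink p q)) • (p + q)


/-- We topologize `GL3` (hence its subset `G₀`, a model of anti-de Sitter space) via the
embedding into `V → V`, i.e. as a subgroup of `GL₃(ℝ)`. -/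
instance : TopologicalSpace GL3 :=
  TopologicalSpace.induced (fun g : GL3 => (⇑g : V → V)) inferInstance

/-!
For `g ∈ G₀` the map `p ↦ g⁻¹ · f(p)` is a `K`-contraction of the complete metric space `ℍ²`, so
it has a unique fixed point `Π(g)`, i.e. a unique `p` with `f(p) = g · p`. The fixed point of a
contraction moves by at most `(1 - K)⁻¹` times the perturbation of the map, so `Π` is continuous.
Every point is some `Π(g)` because `G₀` acts transitively on `ℍ²` (by half-turns), and
equivariance follows from uniqueness of the fixed point. A continuous equivariant map sends
compact sets of `G₀` to compact sets of `ℍ²`, so proper discontinuity of the `j`-action on `ℍ²`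
pulls back to the action on `G₀`.
-/

open Real Set Filter Topology

theorem ContractingWith.continuous_fixedPoint {P α : Type*} [TopologicalSpace P] [MetricSpace α]
    [Nonempty α] [CompleteSpace α] {K : NNReal} {F : P → α → α}
    (hF : ∀ g, ContractingWith K (F g)) (hcont : ∀ x, Continuous fun g => F g x) :
    Continuous fun g => fixedPoint (F g) (hF g) := by
  refine continuous_iff_continuousAt.2 fun g => ?_
  set x := fixedPoint (F g) (hF g)
  have hx : F g x = x := (hF g).fixedPoint_isFixedPt
  rw [ContinuousAt, tendsto_iff_dist_tendsto_zero]
  refine squeeze_zero (g := fun g' => dist (F g' x) (F g x) / (1 - K))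
    (fun _ => dist_nonneg) (fun g' => ?_) ?_
  · rw [dist_comm, dist_comm (F g' x), hx]
    exact (hF g').dist_fixedPoint_le x
  · simpa using
      (((hcont x).tendsto g).dist (tendsto_const_nhds (x := F g x))).div_const (1 - (K : ℝ))

lemma ProperlyDiscOn.of_continuousOn_equivariant {Γ α β : Type*} [TopologicalSpace α]
    [TopologicalSpace β] {act : Γ → α → α} {act' : Γ → β → β} {S : Set α} {T : Set β}
    (proj : α → β) (hproj : ContinuousOn proj S) (hST : MapsTo proj S T)
    (hequiv : ∀ γ, ∀ x ∈ S, proj (act γ x) = act' γ (proj x)) (h : ProperlyDiscOn act' T) :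
    ProperlyDiscOn act S := by
  intro K L hKS hLS hK hL
  refine (h (proj '' K) (proj '' L) (hST.mono_left hKS).image_subset
    (hST.mono_left hLS).image_subset (hK.image_of_continuousOn (hproj.mono hKS))
    (hL.image_of_continuousOn (hproj.mono hLS))).subset ?_
  rintro γ ⟨-, ⟨x, hxK, rfl⟩, hxL⟩
  refine ⟨proj (act γ x), ?_, mem_image_of_mem proj hxL⟩
  rw [hequiv γ x (hKS hxK)]
  exact mem_image_of_mem _ (mem_image_of_mem _ hxK)

lemma mink_comm (x y : V) : mink x y = mink y x := by
  simp only [mink]; ring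

lemma hdist_eq_arcosh (p q : V) : hdist p q = arcosh (-mink p q) := rfl

section Hyperboloid

variable {p q r : V}

lemma one_le_apply_two (hp : p ∈ H2) : 1 ≤ p 2 := by
  obtain ⟨h1, h2⟩ := hp
  simp only [mink] at h1
  nlinarith [sq_nonneg (p 0), sq_nonneg (p 1)]

lemma abs_apply_le_apply_two (hp : p ∈ H2) (i : Fin 3) : |p i| ≤ p 2 := by
  obtain ⟨h1, h2⟩ := hp
  simp only [mink] at h1
  fin_cases i <;> simp only [Fin.zero_eta, Fin.mk_one, Fin.reduceFinMk] <;>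
    apply abs_le_of_sq_le_sq _ h2.le <;> nlinarith [sq_nonneg (p 0), sq_nonneg (p 1)]

lemma H2_eq : H2 = {p | mink p p = -1 ∧ 1 ≤ p 2} := by
  ext p
  exact ⟨fun hp => ⟨hp.1, one_le_apply_two hp⟩, fun hp => ⟨hp.1, by linarith [hp.2]⟩⟩

lemma isClosed_H2 : IsClosed H2 := by
  rw [H2_eq]
  exact (isClosed_eq (by unfold mink; fun_prop) continuous_const).inter
    (isClosed_le continuous_const (continuous_apply 2))

lemma mem_H2_or_neg_mem_H2 (hq : mink q q = -1) : q ∈ H2 ∨ -q ∈ H2 := by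
  have hneg : mink (-q) (-q) = -1 := by simpa [mink] using hq
  rcases lt_trichotomy (q 2) 0 with h | h | h
  · exact Or.inr ⟨hneg, by simpa using h⟩
  · simp only [mink, h] at hq; nlinarith [sq_nonneg (q 0), sq_nonneg (q 1)]
  · exact Or.inl ⟨hq, h⟩

lemma one_le_neg_mink (hp : p ∈ H2) (hq : q ∈ H2) : 1 ≤ -mink p q := by
  obtain ⟨h1, h2⟩ := hp; obtain ⟨k1, k2⟩ := hq
  simp only [mink] at *
  nlinarith [sq_nonneg (p 0 - q 0), sq_nonneg (p 1 - q 1), sq_nonneg (p 0 * q 1 - p 1 * q 0),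
    mul_pos h2 k2, sq_nonneg (p 2 - q 2), sq_nonneg (p 2 * q 2 - 1)]

lemma apply_two_lt (hp : p ∈ H2) (hq : q ∈ H2) : q 2 < 2 * -mink p q * p 2 := by
  have hp1 := one_le_apply_two hp
  have hq1 := one_le_apply_two hq
  obtain ⟨h1, h2⟩ := hp; obtain ⟨k1, k2⟩ := hq
  simp only [mink] at *
  nlinarith [sq_nonneg (p 0 * q 1 - p 1 * q 0), sq_nonneg (p 0 * q 2 - p 2 * q 0),
    sq_nonneg (p 1 * q 2 - p 2 * q 1), mul_pos h2 k2,
    sq_nonneg (2 * p 2 ^ 2 * q 2 - q 2 - 2 * p 2 * (p 0 * q 0 + p 1 * q 1))]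

lemma sq_sub_apply_le (hp : p ∈ H2) (hq : q ∈ H2) (i : Fin 3) :
    (q i - p i) ^ 2 ≤ 2 * (-mink p q - 1) * (1 + 4 * -mink p q * p 2 ^ 2) := by
  have hα := one_le_neg_mink hp hq
  have hq2 := apply_two_lt hp hq
  have hp1 := one_le_apply_two hp
  obtain ⟨h1, h2⟩ := hp; obtain ⟨k1, k2⟩ := hq
  -- with `α = -⟨p|q⟩`, the Minkowski norm of `q - p` is `2 (α - 1)`, and its Euclidean norm
  -- exceeds it by `2 (q₂ - p₂)² ≤ 4 (α - 1) p₂ q₂`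
  have hsum : (q 0 - p 0) ^ 2 + (q 1 - p 1) ^ 2 + (q 2 - p 2) ^ 2
      = 2 * (-mink p q - 1) + 2 * (q 2 - p 2) ^ 2 := by
    simp only [mink] at *; linear_combination h1 + k1
  have hlast : (q 2 - p 2) ^ 2 ≤ 2 * (-mink p q - 1) * (p 2 * q 2) := by
    simp only [mink] at *
    nlinarith [sq_nonneg (p 0 * q 1 - p 1 * q 0), sq_nonneg (p 0 * q 2 - p 2 * q 0),
      sq_nonneg (p 1 * q 2 - p 2 * q 1), mul_pos h2 k2, sq_nonneg (p 0 - q 0),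
      sq_nonneg (p 1 - q 1), sq_nonneg (p 0 + q 0), sq_nonneg (p 1 + q 1)]
  have hbound : 2 * (-mink p q - 1) + 2 * (q 2 - p 2) ^ 2
      ≤ 2 * (-mink p q - 1) * (1 + 4 * -mink p q * p 2 ^ 2) := by
    nlinarith [mul_le_mul_of_nonneg_left hq2.le (by positivity : 0 ≤ (-mink p q - 1) * p 2)]
  fin_cases i <;> simp only [Fin.zero_eta, Fin.mk_one, Fin.reduceFinMk] <;>
    nlinarith [sq_nonneg (q 0 - p 0), sq_nonneg (q 1 - p 1), sq_nonneg (q 2 - p 2)]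

lemma sq_neg_mink_sub_mul_le (hp : p ∈ H2) (hq : q ∈ H2) (hr : r ∈ H2) :
    (-mink p r - -mink p q * -mink q r) ^ 2 ≤ ((-mink p q) ^ 2 - 1) * ((-mink q r) ^ 2 - 1) := by
  -- the Gram determinant of `p, q, r` is `-det(p, q, r)² ≤ 0`
  have gram : mink p p * mink q q * mink r r + 2 * mink p q * mink p r * mink q r
      - mink p p * mink q r ^ 2 - mink q q * mink p r ^ 2 - mink r r * mink p q ^ 2
      = -(p 0 * (q 1 * r 2 - q 2 * r 1) - p 1 * (q 0 * r 2 - q 2 * r 0)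
          + p 2 * (q 0 * r 1 - q 1 * r 0)) ^ 2 := by
    simp only [mink]; ring
  rw [hp.1, hq.1, hr.1] at gram
  nlinarith [sq_nonneg (p 0 * (q 1 * r 2 - q 2 * r 1) - p 1 * (q 0 * r 2 - q 2 * r 0)
    + p 2 * (q 0 * r 1 - q 1 * r 0))]

end Hyperboloid

section HyperbolicDistance

variable {p q r : V}

lemma hdist_comm (p q : V) : hdist p q = hdist q p := by
  rw [hdist_eq_arcosh, hdist_eq_arcosh, mink_comm]

lemma hdist_self (hp : p ∈ H2) : hdist p p = 0 := by
  rw [hdist_eq_arcosh, hp.1, neg_neg, arcosh_zero]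

lemma cosh_hdist (hp : p ∈ H2) (hq : q ∈ H2) : cosh (hdist p q) = -mink p q :=
  cosh_arcosh (one_le_neg_mink hp hq)

lemma hdist_nonneg (hp : p ∈ H2) (hq : q ∈ H2) : 0 ≤ hdist p q :=
  arcosh_nonneg (one_le_neg_mink hp hq)

lemma eq_of_hdist_eq_zero (hp : p ∈ H2) (hq : q ∈ H2) (h : hdist p q = 0) : p = q := by
  have hα : -mink p q = 1 := (arcosh_eq_zero_iff (one_le_neg_mink hp hq)).1 h
  funext i
  have := sq_sub_apply_le hp hq i
  rw [hα] at this
  nlinarith [sq_nonneg (q i - p i)]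

lemma hdist_triangle (hp : p ∈ H2) (hq : q ∈ H2) (hr : r ∈ H2) :
    hdist p r ≤ hdist p q + hdist q r := by
  have hα := one_le_neg_mink hp hq
  have hβ := one_le_neg_mink hq hr
  have hγ := one_le_neg_mink hp hr
  have hsum := add_nonneg (hdist_nonneg hp hq) (hdist_nonneg hq hr)
  rw [← arcosh_cosh hsum, hdist_eq_arcosh p r,
    arcosh_le_arcosh (by linarith) (by positivity), cosh_add, cosh_hdist hp hq, cosh_hdist hq hr,
    hdist_eq_arcosh, hdist_eq_arcosh, sinh_arcosh hα, sinh_arcosh hβ, ← sqrt_mul (by nlinarith)]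
  have key := sq_neg_mink_sub_mul_le hp hq hr
  linarith [le_abs_self (-mink p r - -mink p q * -mink q r), abs_le_sqrt key]

end HyperbolicDistance

/-- `ℍ²` with its hyperbolic metric, as a type distinct from the subtype of `V`, which carries
the sup-norm metric. -/
@[ext]
structure HypPlane where
  val : V
  mem : val ∈ H2

namespace HypPlane

instance : MetricSpace HypPlane where
  dist p q := hdist p.val q.val
  dist_self p := hdist_self p.mem
  dist_comm p q := hdist_comm p.val q.val
  dist_triangle p q r := hdist_triangle p.mem q.mem r.mem
  eq_of_dist_eq_zero {p q} h := HypPlane.ext (eq_of_hdist_eq_zero p.mem q.mem h)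

lemma dist_eq (p q : HypPlane) : dist p q = hdist p.val q.val := rfl

lemma cosh_dist (p q : HypPlane) : cosh (dist p q) = -mink p.val q.val :=
  cosh_hdist p.mem q.mem

instance : Nonempty HypPlane :=
  ⟨⟨![0, 0, 1], by simp [H2, mink]⟩⟩

lemma continuous_val : Continuous val := by
  refine continuous_iff_continuousAt.2 fun p => tendsto_pi_nhds.2 fun i => ?_
  set bound : HypPlane → ℝ := fun q =>
    2 * (cosh (dist p q) - 1) * (1 + 4 * cosh (dist p q) * p.val 2 ^ 2)
  have hbound : Tendsto bound (𝓝 p) (𝓝 0) := by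
    have h : Continuous bound := by fun_prop
    simpa [bound] using h.tendsto p
  have hsq : Tendsto (fun q : HypPlane => (q.val i - p.val i) ^ 2) (𝓝 p) (𝓝 0) :=
    squeeze_zero (fun _ => sq_nonneg _)
      (fun q => by simpa only [bound, cosh_dist] using sq_sub_apply_le p.mem q.mem i) hbound
  rw [tendsto_iff_dist_tendsto_zero]
  simpa [Real.dist_eq, sqrt_sq_eq_abs] using hsq.sqrt

lemma tendsto_of_tendsto_val {ι : Type*} {l : Filter ι} {x : ι → HypPlane} {a : HypPlane}
    (h : Tendsto (fun i => (x i).val) l (𝓝 a.val)) : Tendsto x l (𝓝 a) := by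
  rw [tendsto_iff_dist_tendsto_zero]
  have hmink : Tendsto (fun i => -mink (x i).val a.val) l (𝓝[≥] 1) := by
    refine tendsto_nhdsWithin_iff.2
      ⟨?_, Eventually.of_forall fun i => one_le_neg_mink (x i).mem a.mem⟩
    have : Continuous fun v : V => -mink v a.val := by unfold mink; fun_prop
    simpa [Function.comp_def, a.mem.1] using (this.tendsto a.val).comp h
  simpa [Function.comp_def, arcosh_zero, dist_eq, hdist_eq_arcosh] using
    (continuousOn_arcosh 1 (mem_Ici.2 le_rfl)).tendsto.comp hmink

lemma isInducing_val : Topology.IsInducing val := by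
  refine Topology.isInducing_iff_nhds.2 fun a => le_antisymm ?_ ?_
  · exact continuous_val.continuousAt.le_comap
  · exact tendsto_of_tendsto_val tendsto_comap

lemma norm_val_le (p q : HypPlane) : ‖q.val‖ ≤ 2 * cosh (dist p q) * p.val 2 := by
  have hp := one_le_apply_two p.mem
  refine (pi_norm_le_iff_of_nonneg (by positivity)).2 fun i => ?_
  rw [Real.norm_eq_abs, cosh_dist]
  linarith [abs_apply_le_apply_two q.mem i, apply_two_lt p.mem q.mem]

instance : CompleteSpace HypPlane := by
  refine Metric.complete_of_cauchySeq_tendsto fun u hu => ?_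
  obtain ⟨R, hR0, hR⟩ := cauchySeq_bdd hu
  have hball : ∀ n, (u n).val ∈ Metric.closedBall 0 (2 * cosh R * (u 0).val 2) := fun n => by
    have := one_le_apply_two (u 0).mem
    rw [mem_closedBall_zero_iff]
    refine (norm_val_le (u 0) (u n)).trans ?_
    gcongr
    exact cosh_le_cosh.2 (by simpa [abs_of_nonneg dist_nonneg, abs_of_pos hR0] using (hR 0 n).le)
  obtain ⟨a, -, φ, hφ, hlim⟩ := tendsto_subseq_of_bounded Metric.isBounded_closedBall hball
  have ha : a ∈ H2 :=
    isClosed_H2.mem_of_tendsto hlim (Eventually.of_forall fun n => (u (φ n)).mem)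
  exact ⟨⟨a, ha⟩, tendsto_nhds_of_cauchySeq_of_subseq hu hφ.tendsto_atTop
    (isInducing_val.tendsto_nhds_iff.2 hlim)⟩

end HypPlane

lemma InG0.one : InG0 1 :=
  ⟨fun _ _ => rfl, LinearMap.det_id, fun _ hp => hp⟩

lemma InG0.mul {g h : GL3} (hg : InG0 g) (hh : InG0 h) : InG0 (g * h) := by
  refine ⟨fun x y => (hg.1 _ _).trans (hh.1 x y), ?_, fun p hp => hg.2.2 _ (hh.2.2 p hp)⟩
  rw [LinearEquiv.coe_toLinearMap_mul, map_mul, hg.2.1, hh.2.1, one_mul]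

lemma InG0.inv {g : GL3} (hg : InG0 g) : InG0 g⁻¹ := by
  have hform : ∀ x y : V, mink (g.symm x) (g.symm y) = mink x y := fun x y => by
    simpa using (hg.1 (g.symm x) (g.symm y)).symm
  refine ⟨hform, ?_, fun p hp => ?_⟩
  · have h := g.det_mul_det_symm
    rwa [hg.2.1, one_mul] at h
  · rcases mem_H2_or_neg_mem_H2 ((hform p p).trans hp.1) with h | h
    · exact h
    · have := (hg.2.2 _ h).2
      simp only [map_neg, LinearEquiv.apply_symm_apply, Pi.neg_apply] at this
      linarith [hp.2]

def G0 : Subgroup GL3 where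
  carrier := {g | InG0 g}
  one_mem' := InG0.one
  mul_mem' := InG0.mul
  inv_mem' := InG0.inv

lemma mem_G0 {g : GL3} : g ∈ G0 ↔ InG0 g := Iff.rfl

instance : MulAction G0 HypPlane where
  smul g p := ⟨(g : GL3) p.val, (mem_G0.1 g.2).2.2 _ p.mem⟩
  one_smul _ := rfl
  mul_smul _ _ _ := rfl

lemma G0.smul_val (g : G0) (p : HypPlane) : (g • p).val = (g : GL3) p.val := rfl

instance : IsIsometricSMul G0 HypPlane :=
  ⟨fun g => Isometry.of_dist_eq fun p q => by
    simp only [HypPlane.dist_eq, G0.smul_val, hdist_eq_arcosh, (mem_G0.1 g.2).1]⟩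

lemma apply_eq_mink_single (x : V) (i : Fin 3) :
    x i = mink x (Pi.single i 1) * mink (Pi.single i 1) (Pi.single i 1) := by
  fin_cases i <;> simp [mink]

/-- For `g ∈ G₀`, `g⁻¹` is the Minkowski adjoint of `g`, so its entries are continuous in
those of `g`. -/
lemma G0.continuous_inv_apply (y : V) : Continuous fun g : G0 => ((g⁻¹ : G0) : GL3) y := by
  refine continuous_pi fun i => ?_
  have hcoord : ∀ g : G0, ((g⁻¹ : G0) : GL3) y i
      = mink y ((g : GL3) (Pi.single i 1)) * mink (Pi.single i 1) (Pi.single i 1) := fun g => by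
    rw [apply_eq_mink_single (((g⁻¹ : G0) : GL3) y) i, ← (mem_G0.1 g.2).1, Subgroup.coe_inv,
      LinearEquiv.coe_inv, LinearEquiv.apply_symm_apply]
  simp only [hcoord]
  have heval : Continuous fun g : G0 => (g : GL3) (Pi.single i 1) :=
    (continuous_apply _).comp (continuous_induced_dom.comp continuous_subtype_val)
  unfold mink
  fun_prop

section HalfTurn

variable {m : V}

def halfTurn (m : V) : V →ₗ[ℝ] V where
  toFun x := -x - (2 * mink x m) • m
  map_add' x y := by
    funext i
    simp only [mink, Pi.add_apply, Pi.neg_apply, Pi.sub_apply, Pi.smul_apply, smul_eq_mul]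
    ring
  map_smul' c x := by
    funext i
    simp only [mink, Pi.smul_apply, Pi.neg_apply, Pi.sub_apply, smul_eq_mul, RingHom.id_apply]
    ring

lemma halfTurn_apply (m x : V) : halfTurn m x = -x - (2 * mink x m) • m := rfl

lemma mink_halfTurn (hm : mink m m = -1) (x y : V) :
    mink (halfTurn m x) (halfTurn m y) = mink x y := by
  simp only [halfTurn_apply, mink, Pi.sub_apply, Pi.neg_apply, Pi.smul_apply, smul_eq_mul] at *
  linear_combination (4 * (x 0 * m 0 + x 1 * m 1 - x 2 * m 2)
    * (y 0 * m 0 + y 1 * m 1 - y 2 * m 2)) * hm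

lemma halfTurn_halfTurn (hm : mink m m = -1) (x : V) : halfTurn m (halfTurn m x) = x := by
  funext i
  simp only [halfTurn_apply, mink, Pi.sub_apply, Pi.neg_apply, Pi.smul_apply, smul_eq_mul] at *
  linear_combination (4 * (x 0 * m 0 + x 1 * m 1 - x 2 * m 2) * m i) * hm

lemma det_halfTurn (hm : mink m m = -1) : LinearMap.det (halfTurn m) = 1 := by
  rw [← LinearMap.det_toMatrix', Matrix.det_fin_three]
  simp only [LinearMap.toMatrix'_apply, halfTurn_apply, mink, Pi.sub_apply, Pi.neg_apply,
    Pi.smul_apply, smul_eq_mul] at *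
  norm_num [Pi.single_apply, Fin.ext_iff]
  linear_combination (-2 : ℝ) * hm

lemma halfTurn_mem_H2 (hm : m ∈ H2) {x : V} (hx : x ∈ H2) : halfTurn m x ∈ H2 := by
  refine ⟨(mink_halfTurn hm.1 x x).trans hx.1, ?_⟩
  have := apply_two_lt hm hx
  simp only [halfTurn_apply, Pi.sub_apply, Pi.neg_apply, Pi.smul_apply, smul_eq_mul, mink_comm x m]
  linarith

def halfTurnEquiv (hm : mink m m = -1) : GL3 :=
  LinearEquiv.ofInvolutive (halfTurn m) (halfTurn_halfTurn hm)

lemma inG0_halfTurnEquiv (hm : m ∈ H2) : InG0 (halfTurnEquiv hm.1) :=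
  ⟨mink_halfTurn hm.1, det_halfTurn hm.1, fun _ => halfTurn_mem_H2 hm⟩

lemma exists_halfTurn_eq {p q : V} (hp : p ∈ H2) (hq : q ∈ H2) :
    ∃ m ∈ H2, halfTurn m p = q := by
  -- `m` is the normalized midpoint of `p` and `q`
  have hα := one_le_neg_mink hp hq
  set s := √(2 + 2 * -mink p q)
  have hs : s ^ 2 = 2 + 2 * -mink p q := sq_sqrt (by linarith)
  have hs0 : s ≠ 0 := (sqrt_pos.2 (by linarith)).ne'
  refine ⟨s⁻¹ • (p + q), ⟨?_, ?_⟩, ?_⟩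
  · have hp1 := hp.1; have hq1 := hq.1
    simp only [mink, Pi.smul_apply, Pi.add_apply, smul_eq_mul] at *
    field_simp
    linear_combination hp1 + hq1 + hs
  · simp only [Pi.smul_apply, Pi.add_apply, smul_eq_mul]
    have := hp.2; have := hq.2
    positivity
  · have hp1 := hp.1
    funext i
    simp only [halfTurn_apply, mink, Pi.smul_apply, Pi.add_apply, Pi.sub_apply, Pi.neg_apply,
      smul_eq_mul] at *
    field_simp
    linear_combination (-2 * (p i + q i)) * hp1 - (p i + q i) * hs

end HalfTurn

instance : MulAction.IsPretransitive G0 HypPlane :=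
  ⟨fun p q => by
    obtain ⟨m, hm, hmpq⟩ := exists_halfTurn_eq p.mem q.mem
    exact ⟨⟨halfTurnEquiv hm.1, inG0_halfTurnEquiv hm⟩, HypPlane.ext hmpq⟩⟩

section FiberPoint

variable {K : NNReal} {φ : HypPlane → HypPlane}

lemma ContractingWith.smul_comp (hφ : ContractingWith K φ) (g : G0) :
    ContractingWith K fun p => g • φ p :=
  ⟨hφ.1, fun p q => by simpa only [edist_smul_left] using hφ.2 p q⟩

/-- The point `Π(g)`: fixed points of `g⁻¹ • φ` are the points `p` with `φ p = g • p`. -/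
def fiberPoint (hφ : ContractingWith K φ) (g : G0) : HypPlane :=
  ContractingWith.fixedPoint (fun p => g⁻¹ • φ p) (hφ.smul_comp g⁻¹)

variable (hφ : ContractingWith K φ)

lemma apply_fiberPoint (g : G0) : φ (fiberPoint hφ g) = g • fiberPoint hφ g :=
  inv_smul_eq_iff.1 (ContractingWith.fixedPoint_isFixedPt (hφ.smul_comp g⁻¹))

lemma eq_fiberPoint {g : G0} {p : HypPlane} (hp : φ p = g • p) : p = fiberPoint hφ g :=
  ContractingWith.fixedPoint_unique (hφ.smul_comp g⁻¹) (inv_smul_eq_iff.2 hp)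

lemma continuous_fiberPoint : Continuous (fiberPoint hφ) :=
  ContractingWith.continuous_fixedPoint _ fun p =>
    HypPlane.isInducing_val.continuous_iff.2 (G0.continuous_inv_apply (φ p).val)

lemma surjective_fiberPoint : Function.Surjective (fiberPoint hφ) := fun p => by
  obtain ⟨g, hg⟩ := MulAction.exists_smul_eq G0 p (φ p)
  exact ⟨g, (eq_fiberPoint hφ hg.symm).symm⟩

lemma fiberPoint_mul_mul_inv {a b : G0} (hab : ∀ p, φ (a • p) = b • φ p) (g : G0) :
    fiberPoint hφ (b * g * a⁻¹) = a • fiberPoint hφ g :=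
  (eq_fiberPoint hφ (by rw [hab, apply_fiberPoint hφ g, mul_smul, mul_smul, inv_smul_smul])).symm

end FiberPoint

/-- Proposition 6.2.(1): a `(j,ρ)`-equivariant `K`-Lipschitz map
`f : ℍ² → ℍ²` with `K < 1` yields an equivariant fibration `Π` of anti-de Sitter space `G₀`
over `ℍ²` by timelike geodesic circles, and in particular the action of `Γ` on `G₀` by
`γ·g = ρ(γ) g j(γ)⁻¹` is properly discontinuous. -/
theorem statement4 {Γ : Type*} [Group Γ] (j ρ : Γ →* GL3)
    (hjG0 : ∀ γ : Γ, InG0 (j γ)) (hρG0 : ∀ γ : Γ, InG0 (ρ γ))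
    (hpd : ProperlyDiscOn (fun (γ : Γ) (p : V) => j γ p) H2)
    (f : V → V) (hf : ∀ p ∈ H2, f p ∈ H2)
    (K : ℝ) (hK : K < 1)
    (hLip : ∀ p ∈ H2, ∀ q ∈ H2, hdist (f p) (f q) ≤ K * hdist p q)
    (heqv : ∀ (γ : Γ), ∀ p ∈ H2, f (j γ p) = ρ γ (f p)) :
    ∃ Pr : GL3 → V,
      (∀ g : GL3, InG0 g → Pr g ∈ H2 ∧ f (Pr g) = g (Pr g) ∧
        ∀ p ∈ H2, f p = g p → p = Pr g) ∧
      (ContinuousOn Pr {g : GL3 | InG0 g} ∧ ∀ p ∈ H2, ∃ g : GL3, InG0 g ∧ Pr g = p) ∧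
      (∀ (γ : Γ) (g : GL3), InG0 g → Pr (ρ γ * g * (j γ)⁻¹) = j γ (Pr g)) ∧
      ProperlyDiscOn (fun (γ : Γ) (g : GL3) => ρ γ * g * (j γ)⁻¹) {g : GL3 | InG0 g} := by
  classical
  let φ : HypPlane → HypPlane := fun p => ⟨f p.val, hf _ p.mem⟩
  have hφ : ContractingWith K.toNNReal φ :=
    ⟨by simpa using hK, LipschitzWith.of_dist_le' fun p q => hLip _ p.mem _ q.mem⟩
  let Pr : GL3 → V := fun g => if hg : InG0 g then (fiberPoint hφ ⟨g, mem_G0.2 hg⟩).val else 0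
  have hPr : ∀ g (hg : InG0 g), Pr g = (fiberPoint hφ ⟨g, mem_G0.2 hg⟩).val :=
    fun g hg => dif_pos hg
  have hequiv : ∀ (γ : Γ) (g : GL3), InG0 g → Pr (ρ γ * g * (j γ)⁻¹) = j γ (Pr g) := by
    intro γ g hg
    have hφ_equiv : ∀ p, φ ((⟨j γ, hjG0 γ⟩ : G0) • p) = (⟨ρ γ, hρG0 γ⟩ : G0) • φ p :=
      fun p => HypPlane.ext (heqv γ _ p.mem)
    rw [hPr _ (((hρG0 γ).mul hg).mul (hjG0 γ).inv), hPr g hg]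
    exact congrArg HypPlane.val (fiberPoint_mul_mul_inv hφ hφ_equiv ⟨g, mem_G0.2 hg⟩)
  have hcont : ContinuousOn Pr {g | InG0 g} := by
    rw [continuousOn_iff_continuous_domRestrict]
    exact (HypPlane.continuous_val.comp (continuous_fiberPoint hφ)).congr fun g => (hPr g g.2).symm
  have hmaps : MapsTo Pr {g | InG0 g} H2 := fun g hg => by
    rw [hPr g hg]
    exact (fiberPoint hφ _).mem
  refine ⟨Pr, fun g hg => ⟨hmaps hg, ?_, fun p hp hfp => ?_⟩, ⟨hcont, fun p hp => ?_⟩, hequiv,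
    ProperlyDiscOn.of_continuousOn_equivariant Pr hcont hmaps hequiv hpd⟩
  · rw [hPr g hg]
    exact congrArg HypPlane.val (apply_fiberPoint hφ _)
  · rw [hPr g hg]
    exact congrArg HypPlane.val (eq_fiberPoint hφ (p := ⟨p, hp⟩) (HypPlane.ext hfp))
  · obtain ⟨g, hg⟩ := surjective_fiberPoint hφ ⟨p, hp⟩
    exact ⟨g, g.2, by rw [hPr g g.2, hg]⟩
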